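/- arXiv:0805.0441 — 5 statements merged into one kernel-verified Lean document; each statement's English description precedes it below -/
import Mathlib

section
/- Let (x_0, c_0) be a point with f_{c_0}^N(x_0) = a. Then (x_0, c_0) is a singular point of the plane curve defined by f_c^N(x) - a = 0 if and only if there exists an integer i with 0 ≤ i ≤ N-2 such that f_{c_0}^i(x_0) = 0, f_{c_0}^{N-i}(0) = a, and the derivative with respect to c of f_c^{N-i}(0) vanishes at c = c_0. -/
open MvPolynomial


private lemma evalQ {K : Type*} [CommRing K] (x₀ c₀ : K) (n : ℕ) :
    MvPolynomial.eval ![x₀, c₀] ((fun p : MvPolynomial (Fin 2) K => p ^ 2 + X 1)^[n] (X 0))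
      = (fun x : K => x ^ 2 + c₀)^[n] x₀ := by
  induction n with
  | zero => simp
  | succ n ih =>
    rw [Function.iterate_succ_apply', Function.iterate_succ_apply']
    simp [ih]

private lemma pderivA {K : Type*} [CommRing K] (x₀ c₀ : K) (n : ℕ) :
    MvPolynomial.eval ![x₀, c₀] (pderiv 0 ((fun p : MvPolynomial (Fin 2) K => p ^ 2 + X 1)^[n+1] (X 0)))
      = 2 * ((fun x : K => x ^ 2 + c₀)^[n] x₀)
        * MvPolynomial.eval ![x₀, c₀] (pderiv 0 ((fun p : MvPolynomial (Fin 2) K => p ^ 2 + X 1)^[n] (X 0))) := by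
  rw [Function.iterate_succ_apply']
  rw [map_add, pow_two, pderiv_mul, pderiv_X_of_ne (by decide)]
  rw [← evalQ x₀ c₀]
  simp
  ring

private lemma pderivB {K : Type*} [CommRing K] (x₀ c₀ : K) (n : ℕ) :
    MvPolynomial.eval ![x₀, c₀] (pderiv 1 ((fun p : MvPolynomial (Fin 2) K => p ^ 2 + X 1)^[n+1] (X 0)))
      = 2 * ((fun x : K => x ^ 2 + c₀)^[n] x₀)
        * MvPolynomial.eval ![x₀, c₀] (pderiv 1 ((fun p : MvPolynomial (Fin 2) K => p ^ 2 + X 1)^[n] (X 0))) + 1 := by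
  rw [Function.iterate_succ_apply']
  rw [map_add, pow_two, pderiv_mul, pderiv_X_self]
  rw [← evalQ x₀ c₀]
  simp
  ring

private lemma derivG {K : Type*} [CommRing K] (c₀ : K) (n : ℕ) :
    Polynomial.eval c₀ (Polynomial.derivative ((fun p : Polynomial K => p ^ 2 + Polynomial.X)^[n+1] 0))
      = 2 * Polynomial.eval c₀ ((fun p : Polynomial K => p ^ 2 + Polynomial.X)^[n] 0)
        * Polynomial.eval c₀ (Polynomial.derivative ((fun p : Polynomial K => p ^ 2 + Polynomial.X)^[n] 0)) + 1 := by
  rw [Function.iterate_succ_apply']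
  rw [Polynomial.derivative_add, pow_two, Polynomial.derivative_mul, Polynomial.derivative_X]
  simp
  ring

private lemma evalG {K : Type*} [CommRing K] (c₀ : K) (n : ℕ) :
    Polynomial.eval c₀ ((fun p : Polynomial K => p ^ 2 + Polynomial.X)^[n] 0)
      = (fun x : K => x ^ 2 + c₀)^[n] 0 := by
  induction n with
  | zero => simp
  | succ n ih =>
    rw [Function.iterate_succ_apply', Function.iterate_succ_apply']
    simp [ih]

/-- product formula for the x-partial -/
private lemma prodA {K : Type*} [CommRing K] (x₀ c₀ : K) (n : ℕ) :
    MvPolynomial.eval ![x₀, c₀] (pderiv 0 ((fun p : MvPolynomial (Fin 2) K => p ^ 2 + X 1)^[n] (X 0)))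
      = ∏ j ∈ Finset.range n, (2 * ((fun x : K => x ^ 2 + c₀)^[j] x₀)) := by
  induction n with
  | zero => simp
  | succ n ih =>
    rw [pderivA, ih, Finset.prod_range_succ]
    ring

/-- key: if `f^[i] x₀ = 0` then the c-partial at level `i + (m+1)` equals the derivative
of the univariate iterate `g_{m+1}` at `c₀`. -/
private lemma Bw {K : Type*} [CommRing K] (x₀ c₀ : K) (i : ℕ)
    (hi : (fun x : K => x ^ 2 + c₀)^[i] x₀ = 0) (m : ℕ) :
    MvPolynomial.eval ![x₀, c₀] (pderiv 1 ((fun p : MvPolynomial (Fin 2) K => p ^ 2 + X 1)^[i + (m+1)] (X 0)))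
      = Polynomial.eval c₀ (Polynomial.derivative ((fun p : Polynomial K => p ^ 2 + Polynomial.X)^[m+1] 0)) := by
  induction m with
  | zero =>
    rw [pderivB, hi, derivG]
    simp
  | succ m ih =>
    have hu : (fun x : K => x ^ 2 + c₀)^[i + (m+1)] x₀ = (fun x : K => x ^ 2 + c₀)^[m+1] 0 := by
      rw [add_comm, Function.iterate_add_apply, hi]
    have : i + (m + 1 + 1) = (i + (m+1)) + 1 := by ring
    rw [this, pderivB, ih, hu, ← evalG]
    conv_rhs => rw [derivG c₀ (m+1)]

/-- Characterization of the singular points of the plane curve `f_c^N(x) - a = 0`: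
a point `(x₀, c₀)` on the curve is singular (both partial derivatives vanish) iff there is
`0 ≤ i ≤ N - 2` with `f_{c₀}^i(x₀) = 0`, `f_{c₀}^{N-i}(0) = a`, and the derivative in `c`
of `f_c^{N-i}(0)` vanishing at `c₀`. -/
theorem singular_point_characterization {K : Type*} [Field K] [IsAlgClosed K]
    (hchar : (2 : K) ≠ 0) (a : K) (N : ℕ) (hN : 1 ≤ N) (x₀ c₀ : K)
    (hpt : MvPolynomial.eval ![x₀, c₀]
        ((fun p : MvPolynomial (Fin 2) K => p ^ 2 + X 1)^[N] (X 0)) = a) :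
    (MvPolynomial.eval ![x₀, c₀] (pderiv 0
        ((fun p : MvPolynomial (Fin 2) K => p ^ 2 + X 1)^[N] (X 0))) = 0 ∧
     MvPolynomial.eval ![x₀, c₀] (pderiv 1
        ((fun p : MvPolynomial (Fin 2) K => p ^ 2 + X 1)^[N] (X 0))) = 0) ↔
    (∃ i : ℕ, i + 2 ≤ N ∧
      (fun x : K => x ^ 2 + c₀)^[i] x₀ = 0 ∧
      Polynomial.eval c₀ ((fun p : Polynomial K => p ^ 2 + Polynomial.X)^[N - i] 0) = a ∧
      Polynomial.eval c₀ (Polynomial.derivative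
        ((fun p : Polynomial K => p ^ 2 + Polynomial.X)^[N - i] 0)) = 0) := by
  rw [evalQ] at hpt
  constructor
  · rintro ⟨h1, h2⟩
    rw [prodA] at h1
    obtain ⟨j, hjmem, hj0⟩ := Finset.prod_eq_zero_iff.mp h1
    rw [Finset.mem_range] at hjmem
    have hju : (fun x : K => x ^ 2 + c₀)^[j] x₀ = 0 := by
      rcases mul_eq_zero.mp hj0 with h | h
      · exact absurd h hchar
      · exact h
    obtain ⟨m, hm⟩ : ∃ m, N = j + (m + 1) := ⟨N - j - 1, by omega⟩
    subst hm
    have hB := Bw x₀ c₀ j hju m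
    rw [hB] at h2
    rcases m with _ | m
    · exfalso
      rw [derivG] at h2
      simp at h2
    · refine ⟨j, by omega, hju, ?_, ?_⟩
      · rw [show j + (m + 1 + 1) - j = m + 1 + 1 from by omega, evalG]
        rw [← hpt, ← hju]
        rw [← Function.iterate_add_apply]
        rw [add_comm]
      · rw [show j + (m + 1 + 1) - j = m + 1 + 1 from by omega]
        exact h2
  · rintro ⟨i, hi2, hiu, hga, hgd⟩
    obtain ⟨m, hm⟩ : ∃ m, N = i + (m + 1) := ⟨N - i - 1, by omega⟩
    subst hm
    rw [show i + (m + 1) - i = m + 1 from by omega] at hgd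
    constructor
    · rw [prodA]
      apply Finset.prod_eq_zero (Finset.mem_range.mpr (by omega : i < i + (m + 1)))
      rw [hiu, mul_zero]
    · rw [Bw x₀ c₀ i hiu m]
      exact hgd
end

section
/- If a ∈ K is such that the algebraic set Pre(N,a) = {(x,c) : f_c^N(x) = a} is nonsingular, then for every 1 ≤ M ≤ N, the algebraic set Pre(M,a) is nonsingular. -/
/-!
If `(x, c)` is a singular point of `Pre(M, a)`, choose `y` with `f_c^(N-M)(y) = x`, which exists
because `f_c` is surjective over an algebraically closed field. Then `(y, c)` lies on `Pre(N, a)`,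
and the chain rule for `f_c^N = f_c^M ∘ f_c^(N-M)`, in which `c` enters both factors, expresses
both partial derivatives of `f_c^N` at `(y, c)` as combinations of those of `f_c^M` at `(x, c)`,
so `(y, c)` is singular on `Pre(N, a)`.
-/

open MvPolynomial

/-- The plane curve `Pre(N,a) : f_c^N(x) = a` is nonsingular: the defining polynomial and
its two partial derivatives have no common zero. -/
def PreNonsingular (K : Type*) [Field K] (a : K) (N : ℕ) : Prop :=
  ∀ x c : K,
    MvPolynomial.eval ![x, c]
        ((fun p : MvPolynomial (Fin 2) K => p ^ 2 + X 1)^[N] (X 0)) = a →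
    ¬(MvPolynomial.eval ![x, c] (pderiv 0
          ((fun p : MvPolynomial (Fin 2) K => p ^ 2 + X 1)^[N] (X 0))) = 0 ∧
      MvPolynomial.eval ![x, c] (pderiv 1
          ((fun p : MvPolynomial (Fin 2) K => p ^ 2 + X 1)^[N] (X 0))) = 0)

namespace MvPolynomial

variable {R : Type*} [CommRing R]

/-- `f_c^n(x)` as a polynomial in `X 0 = x` and `X 1 = c`. -/
noncomputable def quadIter (R : Type*) [CommRing R] (n : ℕ) : MvPolynomial (Fin 2) R :=
  (fun p : MvPolynomial (Fin 2) R => p ^ 2 + X 1)^[n] (X 0)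

lemma quadIter_succ (n : ℕ) : quadIter R (n + 1) = quadIter R n ^ 2 + X 1 := by
  rw [quadIter, Function.iterate_succ_apply', ← quadIter]

lemma eval_quadIter (x c : R) (n : ℕ) :
    eval ![x, c] (quadIter R n) = (fun t : R => t ^ 2 + c)^[n] x := by
  induction n with
  | zero => simp [quadIter]
  | succ n ih => simp [quadIter_succ, Function.iterate_succ_apply', ih]

lemma eval_quadIter_add {x y c : R} {k : ℕ} (hy : (fun t : R => t ^ 2 + c)^[k] y = x)
    (m : ℕ) : eval ![y, c] (quadIter R (m + k)) = eval ![x, c] (quadIter R m) := by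
  rw [eval_quadIter, eval_quadIter, Function.iterate_add_apply, hy]

lemma pderiv_zero_quadIter_succ (n : ℕ) :
    pderiv 0 (quadIter R (n + 1)) = 2 * quadIter R n * pderiv 0 (quadIter R n) := by
  rw [quadIter_succ, map_add, Derivation.leibniz_pow, pderiv_X_of_ne (by decide), add_zero,
    smul_eq_mul, nsmul_eq_mul]
  ring

lemma pderiv_one_quadIter_succ (n : ℕ) :
    pderiv 1 (quadIter R (n + 1)) = 2 * quadIter R n * pderiv 1 (quadIter R n) + 1 := by
  rw [quadIter_succ, map_add, Derivation.leibniz_pow, pderiv_X_self, smul_eq_mul, nsmul_eq_mul]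
  ring

lemma eval_pderiv_zero_quadIter_add {x y c : R} {k : ℕ}
    (hy : (fun t : R => t ^ 2 + c)^[k] y = x) (m : ℕ) :
    eval ![y, c] (pderiv 0 (quadIter R (m + k))) =
      eval ![x, c] (pderiv 0 (quadIter R m)) * eval ![y, c] (pderiv 0 (quadIter R k)) := by
  induction m with
  | zero => simp [quadIter]
  | succ m ih =>
    rw [Nat.add_right_comm, pderiv_zero_quadIter_succ, pderiv_zero_quadIter_succ]
    simp only [map_mul, map_ofNat, ih, eval_quadIter_add hy]
    ring

lemma eval_pderiv_one_quadIter_add {x y c : R} {k : ℕ}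
    (hy : (fun t : R => t ^ 2 + c)^[k] y = x) (m : ℕ) :
    eval ![y, c] (pderiv 1 (quadIter R (m + k))) =
      eval ![x, c] (pderiv 0 (quadIter R m)) * eval ![y, c] (pderiv 1 (quadIter R k)) +
        eval ![x, c] (pderiv 1 (quadIter R m)) := by
  induction m with
  | zero => simp [quadIter, pderiv_X_of_ne (show (0 : Fin 2) ≠ 1 by decide)]
  | succ m ih =>
    rw [Nat.add_right_comm, pderiv_one_quadIter_succ, pderiv_one_quadIter_succ,
      pderiv_zero_quadIter_succ]
    simp only [map_add, map_mul, map_one, map_ofNat, ih, eval_quadIter_add hy]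
    ring

end MvPolynomial

lemma preNonsingular_iff_quadIter {K : Type*} [Field K] (a : K) (N : ℕ) :
    PreNonsingular K a N ↔ ∀ x c : K, eval ![x, c] (quadIter K N) = a →
      ¬(eval ![x, c] (pderiv 0 (quadIter K N)) = 0 ∧
        eval ![x, c] (pderiv 1 (quadIter K N)) = 0) :=
  Iff.rfl

lemma IsAlgClosed.surjective_sq_add {K : Type*} [Field K] [IsAlgClosed K] (c : K) :
    Function.Surjective (fun t : K => t ^ 2 + c) := fun w => by
  obtain ⟨z, hz⟩ := IsAlgClosed.exists_pow_nat_eq (w - c) two_pos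
  exact ⟨z, by simp [hz]⟩

theorem preimage_curve_nonsingular_down_general {K : Type*} [Field K] [IsAlgClosed K]
    (a : K) (N : ℕ)
    (h : PreNonsingular K a N) :
    ∀ M : ℕ, 1 ≤ M → M ≤ N → PreNonsingular K a M := by
  intro M _ hMN
  rw [preNonsingular_iff_quadIter] at h ⊢
  intro x c hxa ⟨hdx, hdc⟩
  obtain ⟨y, hy⟩ := (IsAlgClosed.surjective_sq_add c).iterate (N - M) x
  have hsplit : M + (N - M) = N := Nat.add_sub_cancel' hMN
  refine h y c ?_ ⟨?_, ?_⟩ <;> rw [← hsplit]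
  · rw [eval_quadIter_add hy, hxa]
  · rw [eval_pderiv_zero_quadIter_add hy, hdx, zero_mul]
  · rw [eval_pderiv_one_quadIter_add hy, hdx, hdc, zero_mul, add_zero]

/-- If `Pre(N,a)` is nonsingular then `Pre(M,a)` is nonsingular for every `1 ≤ M ≤ N`. -/
theorem preimage_curve_nonsingular_down {K : Type*} [Field K] [IsAlgClosed K]
    (hchar : (2 : K) ≠ 0) (a : K) (N : ℕ) (hN : 1 ≤ N)
    (h : PreNonsingular K a N) :
    ∀ M : ℕ, 1 ≤ M → M ≤ N → PreNonsingular K a M :=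
  preimage_curve_nonsingular_down_general a N h
end

section
/- The affine curve Pre(N,a) is nonsingular if and only if there do not exist an integer j with 2 ≤ j ≤ N and c_0 ∈ K such that f_{c_0}^j(0) = a and the derivative with respect to c of f_c^j(0) vanishes at c = c_0 (i.e., a is not a critical value of the polynomial f_c^j(0) for any 2 ≤ j ≤ N). -/
open MvPolynomial

namespace PreAux

variable {K : Type*} [Field K]

/-- The scalar iterate of `q ↦ q^2 + c`. -/
def It (c : K) (n : ℕ) (x : K) : K := (fun q : K => q ^ 2 + c)^[n] x

lemma It_zero (c x : K) : It c 0 x = x := rfl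

lemma It_succ (c : K) (n : ℕ) (x : K) : It c (n + 1) x = (It c n x) ^ 2 + c := by
  unfold It; rw [Function.iterate_succ_apply']

lemma It_add (c : K) (n m : ℕ) (x : K) : It c (n + m) x = It c m (It c n x) := by
  unfold It; rw [Nat.add_comm, Function.iterate_add_apply]

lemma It_shift {c x : K} {i : ℕ} (h : It c i x = 0) (m : ℕ) :
    It c (i + m) x = It c m 0 := by rw [It_add, h]

/-- The bivariate polynomial `f_c^n(x)`. -/
noncomputable def P (K : Type*) [Field K] (n : ℕ) : MvPolynomial (Fin 2) K :=
  (fun p : MvPolynomial (Fin 2) K => p ^ 2 + X 1)^[n] (X 0)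

lemma P_def (n : ℕ) :
    ((fun p : MvPolynomial (Fin 2) K => p ^ 2 + X 1)^[n] (X 0)) = P K n := rfl

lemma P_zero : P K 0 = X 0 := rfl

lemma P_succ (n : ℕ) : P K (n + 1) = (P K n) ^ 2 + X 1 := by
  unfold P; rw [Function.iterate_succ_apply']

lemma eval_P (x c : K) (n : ℕ) : eval ![x, c] (P K n) = It c n x := by
  induction n with
  | zero => simp [P_zero, It_zero]
  | succ n ih => rw [P_succ, It_succ]; simp [ih]

lemma eval_pd0_zero (x c : K) : eval ![x, c] (pderiv 0 (P K 0)) = 1 := by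
  rw [P_zero, pderiv_X_self]; simp

lemma eval_pd0_succ (x c : K) (n : ℕ) :
    eval ![x, c] (pderiv 0 (P K (n + 1)))
      = 2 * It c n x * eval ![x, c] (pderiv 0 (P K n)) := by
  rw [P_succ, map_add, sq, pderiv_mul, pderiv_X_of_ne (by decide : (1 : Fin 2) ≠ 0)]
  simp [eval_P]; try ring

lemma eval_pd1_zero (x c : K) : eval ![x, c] (pderiv 1 (P K 0)) = 0 := by
  rw [P_zero, pderiv_X_of_ne (by decide : (0 : Fin 2) ≠ 1)]; simp

lemma eval_pd1_succ (x c : K) (n : ℕ) :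
    eval ![x, c] (pderiv 1 (P K (n + 1)))
      = 2 * It c n x * eval ![x, c] (pderiv 1 (P K n)) + 1 := by
  rw [P_succ, map_add, sq, pderiv_mul, pderiv_X_self]
  simp [eval_P]; try ring

/-- The univariate polynomial `g_n(c) = f_c^n(0)`. -/
noncomputable def G (K : Type*) [Field K] (n : ℕ) : Polynomial K :=
  (fun p : Polynomial K => p ^ 2 + Polynomial.X)^[n] 0

lemma G_def (n : ℕ) :
    ((fun p : Polynomial K => p ^ 2 + Polynomial.X)^[n] 0) = G K n := rfl

lemma G_zero : G K 0 = 0 := rfl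

lemma G_succ (n : ℕ) : G K (n + 1) = (G K n) ^ 2 + Polynomial.X := by
  unfold G; rw [Function.iterate_succ_apply']

lemma eval_G (c : K) (n : ℕ) : Polynomial.eval c (G K n) = It c n 0 := by
  induction n with
  | zero => simp [G_zero, It_zero]
  | succ n ih => rw [G_succ, It_succ]; simp [ih]

lemma eval_dG_succ (c : K) (n : ℕ) :
    Polynomial.eval c (Polynomial.derivative (G K (n + 1)))
      = 2 * It c n 0 * Polynomial.eval c (Polynomial.derivative (G K n)) + 1 := by
  rw [G_succ, Polynomial.derivative_add, Polynomial.derivative_pow, Polynomial.derivative_X]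
  simp [eval_G]; try ring

lemma dce_shift (x c : K) (i : ℕ) (h : It c i x = 0) : ∀ m : ℕ,
    eval ![x, c] (pderiv 1 (P K (i + (m + 1))))
      = Polynomial.eval c (Polynomial.derivative (G K (m + 1))) := by
  intro m
  induction m with
  | zero =>
    rw [show i + (0 + 1) = i + 1 from rfl, eval_pd1_succ, h, eval_dG_succ]
    simp [It_zero, G_zero]
  | succ m ih =>
    rw [show i + (m + 1 + 1) = (i + (m + 1)) + 1 by ring, eval_pd1_succ,
      eval_dG_succ c (m + 1), ih, It_shift h (m + 1)]

lemma dxe_zero_iff (h2 : (2 : K) ≠ 0) (x c : K) (n : ℕ) :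
    eval ![x, c] (pderiv 0 (P K n)) = 0 ↔ ∃ i < n, It c i x = 0 := by
  induction n with
  | zero => simp [eval_pd0_zero]
  | succ n ih =>
    rw [eval_pd0_succ]
    constructor
    · intro h0
      rcases mul_eq_zero.mp h0 with h | h
      · rcases mul_eq_zero.mp h with h | h
        · exact absurd h h2
        · exact ⟨n, Nat.lt_succ_self n, h⟩
      · obtain ⟨i, hi, h⟩ := ih.mp h
        exact ⟨i, hi.trans (Nat.lt_succ_self n), h⟩
    · rintro ⟨i, hi, h⟩
      rcases Nat.lt_succ_iff_lt_or_eq.mp hi with hi | hi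
      · rw [ih.mpr ⟨i, hi, h⟩, mul_zero]
      · subst hi; rw [h]; ring

lemma It_surj [IsAlgClosed K] (c : K) (n : ℕ) : ∀ y : K, ∃ x : K, It c n x = y := by
  induction n with
  | zero => exact fun y => ⟨y, rfl⟩
  | succ n ih =>
    intro y
    obtain ⟨z, hz⟩ := IsAlgClosed.exists_pow_nat_eq (y - c) (n := 2) (by norm_num)
    obtain ⟨x, hx⟩ := ih z
    exact ⟨x, by rw [It_succ, hx, hz]; ring⟩

end PreAux

open PreAux in
/-- `Pre(N,a)` is nonsingular iff `a` is not a critical value of `f_c^j(0)` for any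
`2 ≤ j ≤ N`. -/
theorem preimage_curve_nonsingular_iff {K : Type*} [Field K] [IsAlgClosed K]
    (hchar : (2 : K) ≠ 0) (a : K) (N : ℕ) (hN : 1 ≤ N) :
    PreNonsingular K a N ↔
      ¬ ∃ j : ℕ, 2 ≤ j ∧ j ≤ N ∧ ∃ c₀ : K,
        Polynomial.eval c₀ ((fun p : Polynomial K => p ^ 2 + Polynomial.X)^[j] 0) = a ∧
        Polynomial.eval c₀ (Polynomial.derivative
          ((fun p : Polynomial K => p ^ 2 + Polynomial.X)^[j] 0)) = 0 := by
  unfold PreNonsingular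
  simp only [P_def, G_def]
  constructor
  · rintro hns ⟨j, hj2, hjN, c₀, hval, hder⟩
    obtain ⟨x, hx⟩ := It_surj c₀ (N - j) 0
    have hNj : N - j + j = N := Nat.sub_add_cancel hjN
    refine hns x c₀ ?_ ⟨?_, ?_⟩
    · rw [eval_P, ← hNj, It_shift hx j, ← eval_G, hval]
    · exact (dxe_zero_iff hchar x c₀ N).mpr ⟨N - j, by omega, hx⟩
    · have := dce_shift x c₀ (N - j) hx (j - 1)
      rw [show j - 1 + 1 = j by omega, hNj] at this
      rw [this, hder]
  · intro h x c heval hsing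
    obtain ⟨hdx, hdc⟩ := hsing
    obtain ⟨i, hiN, hzero⟩ := (dxe_zero_iff hchar x c N).mp hdx
    set j := N - i with hjdef
    have hij : i + j = N := by omega
    have hWj : Polynomial.eval c (Polynomial.derivative (G K j)) = 0 := by
      have := dce_shift x c i hzero (j - 1)
      rw [show j - 1 + 1 = j by omega, hij] at this
      rw [← this]; exact hdc
    have hVj : Polynomial.eval c (G K j) = a := by
      rw [eval_G, ← It_shift hzero j, hij, ← eval_P x c N, heval]
    have hj2 : 2 ≤ j := by
      by_contra h'
      have hj1 : j = 1 := by omega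
      rw [hj1, show (1 : ℕ) = 0 + 1 from rfl, eval_dG_succ] at hWj
      simp [It_zero, G_zero] at hWj
    exact h ⟨j, hj2, by omega, c, hVj, hWj⟩
end

section
/- For every a ∈ K, the affine plane curve defined by x^2 + c = a is nonsingular, and for every a ∈ K with a ≠ -1/4, the affine plane curve defined by (x^2+c)^2 + c = a is nonsingular. -/
open MvPolynomial

/-- `Pre(1,a)` is nonsingular for every `a`, and `Pre(2,a)` is nonsingular for every
`a ≠ -1/4`. -/
theorem pre_one_two_nonsingular {K : Type*} [Field K] [IsAlgClosed K]
    (hchar : (2 : K) ≠ 0) (a : K) :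
    (∀ x c : K, (X 0 ^ 2 + X 1 : MvPolynomial (Fin 2) K).eval ![x, c] = a →
      ¬(MvPolynomial.eval ![x, c] (pderiv 0 (X 0 ^ 2 + X 1 : MvPolynomial (Fin 2) K)) = 0 ∧
        MvPolynomial.eval ![x, c] (pderiv 1 (X 0 ^ 2 + X 1 : MvPolynomial (Fin 2) K)) = 0)) ∧
    (a ≠ -1/4 →
      ∀ x c : K,
        ((X 0 ^ 2 + X 1) ^ 2 + X 1 : MvPolynomial (Fin 2) K).eval ![x, c] = a →
        ¬(MvPolynomial.eval ![x, c]
              (pderiv 0 ((X 0 ^ 2 + X 1) ^ 2 + X 1 : MvPolynomial (Fin 2) K)) = 0 ∧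
          MvPolynomial.eval ![x, c]
              (pderiv 1 ((X 0 ^ 2 + X 1) ^ 2 + X 1 : MvPolynomial (Fin 2) K)) = 0)) := by
  constructor
  · rintro x c _ ⟨_, h1⟩
    simp at h1
  · rintro ha x c hval ⟨h0, h1⟩
    simp only [map_add, map_pow, eval_X, Matrix.cons_val_zero, Matrix.cons_val_one,
      Matrix.head_cons] at hval
    simp [Derivation.leibniz, Derivation.leibniz_pow] at h0 h1
    have hs : x ^ 2 + c = -(2⁻¹) := by
      have h2 : (2 : K) * (x ^ 2 + c) = -1 := by ring_nf; linear_combination h1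
      field_simp
      linear_combination h2
    have hne : (x ^ 2 + c) ≠ 0 := by
      rw [hs]
      simpa using inv_ne_zero hchar
    have hx : x = 0 := by
      rcases h0 with h | h | h | h
      · exact absurd h hchar
      · exact absurd h hne
      · exact absurd h hchar
      · exact h
    apply ha
    rw [← hval, hx]
    have hc : c = -(2⁻¹) := by
      have := hs
      rw [hx] at this
      simpa using this
    rw [hc]
    have h4 : (4:K) ≠ 0 := fun h => hchar (mul_self_eq_zero.1 (by linear_combination h))
    rw [eq_div_iff h4, inv_eq_one_div]
    field_simp
    ring
end

section
/- Let a ∈ O_K be an algebraic integer in a number field K (or more generally a = a_1/a_2 with a_1, a_2 ∈ O_K and a_2 not in some prime p of O_K above 2). Then for every N ≥ 1 and every j with 2 ≤ j ≤ N, there is no c_0 ∈ the algebraic closure of Q with f_{c_0}^j(0) = a and the derivative of f_c^j(0) with respect to c vanishing at c_0; equivalently, Pre(N,a) is nonsingular. -/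
open Polynomial

private noncomputable def FF (j : ℕ) : Polynomial ℤ := (fun p : Polynomial ℤ => p ^ 2 + X)^[j] 0

private lemma FF_succ (j : ℕ) : FF (j+1) = (FF j)^2 + X :=
  Function.iterate_succ_apply' _ _ _

private lemma FF_monic : ∀ j : ℕ, 1 ≤ j → (FF j).Monic ∧ 1 ≤ (FF j).natDegree := by
  intro j hj
  induction j with
  | zero => omega
  | succ k ih =>
    rcases Nat.lt_or_ge k 1 with hk | hk
    · interval_cases k
      have h1 : FF 1 = X := by
        show (fun p : Polynomial ℤ => p ^ 2 + X)^[1] 0 = X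
        simp
      rw [h1]
      exact ⟨monic_X, by simp⟩
    · obtain ⟨hm, hd⟩ := ih hk
      have hpm : ((FF k) ^ 2).Monic := hm.pow 2
      have hdeg : degree (X : Polynomial ℤ) < degree ((FF k) ^ 2) := by
        rw [degree_X, degree_eq_natDegree hpm.ne_zero, natDegree_pow]
        exact_mod_cast by omega
      rw [FF_succ]
      refine ⟨hpm.add_of_left hdeg, ?_⟩
      rw [natDegree_add_eq_left_of_degree_lt hdeg, natDegree_pow]
      omega

private lemma FF_deriv (k : ℕ) :
    derivative (FF (k+1)) = 2 * (FF k) * derivative (FF k) + 1 := by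
  rw [FF_succ]
  simp [derivative_pow]

/-- Let `K` be a number field and `a = a₁/a₂` with `a₁, a₂ ∈ 𝓞 K` and `a₂` not in some
prime `𝔭` of `𝓞 K` above `2`. Then for every `j ≥ 2` there is no `c₀` in the algebraic
closure of `K` with `f_{c₀}^j(0) = a` and the derivative of `f_c^j(0)` vanishing at `c₀`;
i.e., `Pre(N,a)` is nonsingular for every `N`. -/
theorem integral_at_two_nonsingular {K : Type*} [Field K] [NumberField K]
    (𝔭 : Ideal (NumberField.RingOfIntegers K)) (hp : 𝔭.IsPrime)
    (h2 : (2 : NumberField.RingOfIntegers K) ∈ 𝔭)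
    (a : K) (a₁ a₂ : NumberField.RingOfIntegers K) (ha₂ : a₂ ∉ 𝔭)
    (ha : a = (a₁ : K) / (a₂ : K)) :
    ∀ j : ℕ, 2 ≤ j →
      ¬ ∃ c₀ : AlgebraicClosure K,
        Polynomial.aeval c₀
            (((fun p : Polynomial ℤ => p ^ 2 + X)^[j] 0).map (Int.castRingHom K)) =
          algebraMap K (AlgebraicClosure K) a ∧
        Polynomial.aeval c₀
            (Polynomial.derivative
              (((fun p : Polynomial ℤ => p ^ 2 + X)^[j] 0).map (Int.castRingHom K))) = 0 := by
  intro j hj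
  rintro ⟨c₀, h1, h2'⟩
  rw [show ((fun p : Polynomial ℤ => p ^ 2 + X)^[j] 0) = FF j from rfl] at h1 h2'
  rw [show Int.castRingHom K = algebraMap ℤ K from rfl, aeval_map_algebraMap] at h1
  rw [show Int.castRingHom K = algebraMap ℤ K from rfl, Polynomial.derivative_map,
    aeval_map_algebraMap] at h2'
  obtain ⟨k, rfl⟩ : ∃ k, j = k + 1 := ⟨j - 1, by omega⟩
  have hk : 1 ≤ k := by omega
  set q : AlgebraicClosure K := aeval c₀ (FF k) with hq'
  set r : AlgebraicClosure K := aeval c₀ (derivative (FF k)) with hr'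
  have hqr : 2 * q * r + 1 = 0 := by
    rw [FF_deriv] at h2'
    simpa [hq', hr', map_ofNat] using h2'
  -- the localization of O away from a₂, as a subalgebra of K
  have ha₂0 : a₂ ≠ 0 := fun h => ha₂ (h ▸ 𝔭.zero_mem)
  have hM : Submonoid.powers a₂ ≤ nonZeroDivisors (NumberField.RingOfIntegers K) := by
    rintro x ⟨n, rfl⟩
    exact mem_nonZeroDivisors_of_ne_zero (pow_ne_zero n ha₂0)
  set S : Subalgebra (NumberField.RingOfIntegers K) K := Localization.subalgebra K (Submonoid.powers a₂) hM with hS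
  have haS : a ∈ S := by
    refine ⟨a₁, a₂, ⟨1, pow_one a₂⟩, ?_⟩
    rw [IsFractionRing.mk'_eq_div, ha]
  -- c₀ is integral over S
  have hzmap : (algebraMap ↥S (AlgebraicClosure K)).comp (algebraMap ℤ ↥S)
      = algebraMap ℤ (AlgebraicClosure K) := Subsingleton.elim _ _
  have hc₀ : IsIntegral ↥S c₀ := by
    refine ⟨(FF (k+1)).map (algebraMap ℤ ↥S) + C (-(⟨a, haS⟩ : ↥S)), ?_, ?_⟩
    · apply Monic.add_of_left ((FF_monic (k+1) (by omega)).1.map _)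
      refine lt_of_le_of_lt (degree_C_le) ?_
      rw [(FF_monic (k+1) (by omega)).1.degree_map]
      exact natDegree_pos_iff_degree_pos.mp (by have := (FF_monic (k+1) (by omega)).2; omega)
    · rw [eval₂_add, eval₂_C, eval₂_map, hzmap]
      have : eval₂ (algebraMap ℤ (AlgebraicClosure K)) c₀ (FF (k+1))
          = aeval c₀ (FF (k+1)) := rfl
      rw [this, h1]
      have hmn : (algebraMap ↥S (AlgebraicClosure K)) (-(⟨a, haS⟩ : ↥S))
          = - algebraMap K (AlgebraicClosure K) a := by
        rw [RingHom.map_neg, IsScalarTower.algebraMap_apply ↥S K (AlgebraicClosure K)]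
        rfl
      rw [hmn]
      ring
  have haev : ∀ p : Polynomial ℤ, IsIntegral ↥S (aeval c₀ p) := by
    intro p
    have hmem : aeval c₀ p ∈ Algebra.adjoin ↥S {c₀} := by
      have heq : aeval c₀ (p.map (algebraMap ℤ ↥S)) = aeval c₀ p := aeval_map_algebraMap _ _ _
      rw [← heq]
      exact aeval_mem_adjoin_singleton _ _
    exact IsIntegral.of_mem_of_fg _ hc₀.fg_adjoin_singleton _ hmem
  have hq : IsIntegral ↥S q := haev _
  have hr : IsIntegral ↥S r := haev _
  haveI : CharZero (AlgebraicClosure K) :=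
    charZero_of_injective_algebraMap (algebraMap K (AlgebraicClosure K)).injective
  have hmap : algebraMap K (AlgebraicClosure K) (1/2) = -(q * r) := by
    rw [map_div₀, map_one, map_ofNat]
    linear_combination hqr / 2
  have hint : IsIntegral ↥S ((1/2 : K)) := by
    have hi := (hq.mul hr).neg
    rw [← hmap] at hi
    exact (isIntegral_algebraMap_iff
      (algebraMap K (AlgebraicClosure K)).injective).mp hi
  haveI : IsIntegrallyClosed ↥S :=
    isIntegrallyClosed_of_isLocalization ↥S (Submonoid.powers a₂) hM
  obtain ⟨y, hy⟩ := IsIntegrallyClosed.isIntegral_iff.mp hint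
  obtain ⟨⟨b, m⟩, hbm⟩ := IsLocalization.surj (M := Submonoid.powers a₂) (S := ↥S) y
  obtain ⟨n, hn⟩ := m.2
  have hn' : a₂ ^ n = (m : NumberField.RingOfIntegers K) := hn
  have hbmK := congrArg (algebraMap ↥S K) hbm
  rw [map_mul, hy, ← IsScalarTower.algebraMap_apply, ← IsScalarTower.algebraMap_apply] at hbmK
  have hKeq : algebraMap (NumberField.RingOfIntegers K) K (a₂ ^ n)
      = algebraMap (NumberField.RingOfIntegers K) K (2 * b) := by
    rw [hn', map_mul, map_ofNat]
    field_simp at hbmK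
    linear_combination hbmK
  have heq : a₂ ^ n = 2 * b := IsFractionRing.injective (NumberField.RingOfIntegers K) K hKeq
  exact ha₂ (hp.mem_of_pow_mem n (heq ▸ Ideal.mul_mem_right _ _ h2))
end
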